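/- arXiv:1303.7437 — 6 statements merged into one kernel-verified Lean document; each statement's English description precedes it below -/
import Mathlib

section
/- For every a > 0, all natural numbers k and m, and every real t ≥ 0, the convolution of two Laguerre functions satisfies ∫₀ᵗ φ_k(x) φ_m(t − x) dx = (2a)^{−1/2} ( φ_{k+m}(t) − φ_{k+m+1}(t) ). -/
/-!
Expanding both Laguerre polynomials reduces the convolution of `L_k` and `L_m` to the Beta
integrals `∫₀ˢ uⁱ/i! · (s-u)ʲ/j! du = s^(i+j+1)/(i+j+1)!`; Vandermonde's identity collects the
result into `∑ₙ (-1)ⁿ C(k+m,n) s^(n+1)/(n+1)!`, which Pascal's rule identifies with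
`L_{k+m}(s) - L_{k+m+1}(s)`. For the Laguerre functions the exponentials multiply to `e^{-at}`
and the substitution `u = 2ax` reduces everything to this polynomial identity.
-/

open MeasureTheory Real

/-- The Laguerre polynomial `L_ℓ(t) = ∑_{j=0}^ℓ (-1)^j (ℓ choose j) t^j / j!`. -/
noncomputable def laguerrePoly (ℓ : ℕ) (t : ℝ) : ℝ :=
  ∑ j ∈ Finset.range (ℓ + 1), (-1 : ℝ) ^ j * (ℓ.choose j) * t ^ j / (j.factorial)

/-- The Laguerre function with parameter `a`: `φ_ℓ(t) = √(2a) e^{-a t} L_ℓ(2 a t)`. -/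
noncomputable def laguerreFun (a : ℝ) (ℓ : ℕ) (t : ℝ) : ℝ :=
  Real.sqrt (2 * a) * Real.exp (-(a * t)) * laguerrePoly ℓ (2 * a * t)

open intervalIntegral Finset
open scoped Nat

theorem hasDerivAt_pow_succ_div_factorial (n : ℕ) (x : ℝ) :
    HasDerivAt (fun y : ℝ => y ^ (n + 1) / (n + 1)!) (x ^ n / n !) x := by
  refine ((hasDerivAt_pow (n + 1) x).div_const _).congr_deriv ?_
  rw [Nat.factorial_succ, Nat.add_sub_cancel]
  push_cast
  field_simp

theorem integral_pow_div_factorial_mul_sub_pow_div_factorial (i j : ℕ) (s : ℝ) :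
    ∫ x in (0 : ℝ)..s, x ^ i / i ! * ((s - x) ^ j / j !) = s ^ (i + j + 1) / (i + j + 1)! := by
  induction j generalizing i with
  | zero =>
    simp only [pow_zero, Nat.factorial_zero, Nat.cast_one, div_one, mul_one, add_zero,
      intervalIntegral.integral_div, integral_pow, zero_pow i.succ_ne_zero, sub_zero]
    rw [Nat.factorial_succ, div_div]
    push_cast
    ring
  | succ j ih =>
    have parts := integral_mul_deriv_eq_deriv_mul (a := 0) (b := s)
      (fun x _ => (hasDerivAt_pow_succ_div_factorial j (s - x)).comp_const_sub s x)
      (fun x _ => hasDerivAt_pow_succ_div_factorial i x)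
      (Continuous.intervalIntegrable (by fun_prop) _ _)
      (Continuous.intervalIntegrable (by fun_prop) _ _)
    calc ∫ x in (0 : ℝ)..s, x ^ i / i ! * ((s - x) ^ (j + 1) / (j + 1)!)
        = ∫ x in (0 : ℝ)..s, (s - x) ^ (j + 1) / (j + 1)! * (x ^ i / i !) := by
          simp_rw [mul_comm]
      _ = ∫ x in (0 : ℝ)..s, x ^ (i + 1) / (i + 1)! * ((s - x) ^ j / j !) := by
          rw [parts]
          simp [mul_comm]
      _ = s ^ (i + (j + 1) + 1) / (i + (j + 1) + 1)! := by
          rw [ih, Nat.add_right_comm i 1 j, ← Nat.add_assoc]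

theorem sum_range_choose_mul_sum_range_choose {R : Type*} [CommSemiring R] (k m : ℕ)
    (g : ℕ → R) :
    ∑ i ∈ range (k + 1), ∑ j ∈ range (m + 1), (k.choose i * m.choose j : R) * g (i + j)
      = ∑ n ∈ range (k + m + 1), ((k + m).choose n : R) * g n := by
  -- group `(i, j)` by `n = i + j`; the pairs of `antidiagonal n` outside the rectangle
  -- contribute `0` to Vandermonde's sum
  rw [← sum_product', ← sum_fiberwise_of_maps_to (g := fun p => p.1 + p.2)
    (t := range (k + m + 1)) (fun p hp => by
      simp only [mem_product, mem_range] at hp ⊢; omega)]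
  refine sum_congr rfl fun n _ => ?_
  rw [Nat.add_choose_eq, Nat.cast_sum, sum_mul]
  refine sum_subset_zero_on_sdiff (fun p hp => ?_) (fun p hp => ?_) (fun p hp => ?_)
  · simp_all
  · simp only [mem_sdiff, mem_filter, mem_product, mem_range,
      HasAntidiagonal.mem_antidiagonal] at hp
    rcases Nat.lt_or_ge k p.1 with hk | hk
    · simp [Nat.choose_eq_zero_of_lt hk]
    · simp [Nat.choose_eq_zero_of_lt (show m < p.2 by omega)]
  · rw [(mem_filter.mp hp).2]
    push_cast
    rfl

theorem laguerrePoly_eq_sum (ℓ : ℕ) (t : ℝ) :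
    laguerrePoly ℓ t = ∑ j ∈ range (ℓ + 1), (-1) ^ j * (ℓ.choose j : ℝ) * (t ^ j / j !) := by
  simp only [laguerrePoly, mul_div_assoc]

theorem laguerrePoly_sub_laguerrePoly_succ (ℓ : ℕ) (s : ℝ) :
    laguerrePoly ℓ s - laguerrePoly (ℓ + 1) s
      = ∑ n ∈ range (ℓ + 1), (ℓ.choose n : ℝ) * ((-1) ^ n * (s ^ (n + 1) / (n + 1)!)) := by
  have hL :
      laguerrePoly ℓ s = ∑ j ∈ range (ℓ + 2), (-1 : ℝ) ^ j * (ℓ.choose j) * s ^ j / j ! := by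
    rw [laguerrePoly, sum_range_succ (n := ℓ + 1), Nat.choose_succ_self]
    simp
  rw [hL, laguerrePoly, ← sum_sub_distrib, sum_range_succ']
  simp only [Nat.choose_succ_succ', Nat.choose_zero_right, sub_self, add_zero]
  refine sum_congr rfl fun n _ => ?_
  push_cast
  ring

theorem integral_laguerrePoly_mul_laguerrePoly_sub (k m : ℕ) (s : ℝ) :
    ∫ u in (0 : ℝ)..s, laguerrePoly k u * laguerrePoly m (s - u)
      = laguerrePoly (k + m) s - laguerrePoly (k + m + 1) s := by
  calc ∫ u in (0 : ℝ)..s, laguerrePoly k u * laguerrePoly m (s - u)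
      = ∫ u in (0 : ℝ)..s, ∑ i ∈ range (k + 1), ∑ j ∈ range (m + 1),
          (-1) ^ i * (k.choose i : ℝ) * ((-1) ^ j * m.choose j)
            * (u ^ i / i ! * ((s - u) ^ j / j !)) := by
        simp only [laguerrePoly_eq_sum, sum_mul_sum, mul_mul_mul_comm]
    _ = ∑ i ∈ range (k + 1), ∑ j ∈ range (m + 1),
          (-1) ^ i * (k.choose i : ℝ) * ((-1) ^ j * m.choose j)
            * (s ^ (i + j + 1) / (i + j + 1)!) := by
        rw [integral_finsetSum fun i _ => Continuous.intervalIntegrable (by fun_prop) _ _]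
        refine sum_congr rfl fun i _ => ?_
        rw [integral_finsetSum fun j _ => Continuous.intervalIntegrable (by fun_prop) _ _]
        simp only [intervalIntegral.integral_const_mul,
          integral_pow_div_factorial_mul_sub_pow_div_factorial]
    _ = ∑ n ∈ range (k + m + 1),
          ((k + m).choose n : ℝ) * ((-1) ^ n * (s ^ (n + 1) / (n + 1)!)) := by
        rw [← sum_range_choose_mul_sum_range_choose]
        refine sum_congr rfl fun i _ => sum_congr rfl fun j _ => ?_
        ring
    _ = laguerrePoly (k + m) s - laguerrePoly (k + m + 1) s :=
        (laguerrePoly_sub_laguerrePoly_succ (k + m) s).symm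

theorem laguerreFun_mul_laguerreFun_sub {a : ℝ} (ha : 0 ≤ a) (k m : ℕ) (t x : ℝ) :
    laguerreFun a k x * laguerreFun a m (t - x)
      = 2 * a * exp (-(a * t))
          * (laguerrePoly k (2 * a * x) * laguerrePoly m (2 * a * t - 2 * a * x)) := by
  have hexp : exp (-(a * x)) * exp (-(a * (t - x))) = exp (-(a * t)) := by
    rw [← exp_add]
    ring_nf
  calc laguerreFun a k x * laguerreFun a m (t - x)
      = (√(2 * a) * √(2 * a)) * (exp (-(a * x)) * exp (-(a * (t - x))))
          * (laguerrePoly k (2 * a * x) * laguerrePoly m (2 * a * (t - x))) := by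
        simp only [laguerreFun]
        ring
    _ = _ := by rw [mul_self_sqrt (by positivity), hexp, mul_sub]

theorem laguerre_convolution_general (a : ℝ) (ha : 0 < a) (k m : ℕ) (t : ℝ) :
    ∫ x in (0:ℝ)..t, laguerreFun a k x * laguerreFun a m (t - x)
      = (2 * a) ^ (-(1/2 : ℝ)) *
        (laguerreFun a (k + m) t - laguerreFun a (k + m + 1) t) := by
  have h2a : 0 < 2 * a := by positivity
  calc ∫ x in (0:ℝ)..t, laguerreFun a k x * laguerreFun a m (t - x)
      = exp (-(a * t))
          * ∫ u in (0:ℝ)..2 * a * t, laguerrePoly k u * laguerrePoly m (2 * a * t - u) := by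
        rw [integral_congr fun x _ => laguerreFun_mul_laguerreFun_sub ha.le k m t x,
          intervalIntegral.integral_const_mul,
          integral_comp_mul_left (fun u => laguerrePoly k u * laguerrePoly m (2 * a * t - u))
            h2a.ne',
          mul_zero, smul_eq_mul]
        field_simp
    _ = exp (-(a * t))
          * (laguerrePoly (k + m) (2 * a * t) - laguerrePoly (k + m + 1) (2 * a * t)) := by
        rw [integral_laguerrePoly_mul_laguerrePoly_sub]
    _ = (2 * a) ^ (-(1/2 : ℝ)) * (laguerreFun a (k + m) t - laguerreFun a (k + m + 1) t) := by
        rw [rpow_neg h2a.le, ← sqrt_eq_rpow]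
        simp only [laguerreFun]
        field_simp

/-- The convolution of two Laguerre functions:
`∫₀ᵗ φ_k(x) φ_m(t-x) dx = (2a)^{-1/2} (φ_{k+m}(t) - φ_{k+m+1}(t))`. -/
theorem laguerre_convolution (a : ℝ) (ha : 0 < a) (k m : ℕ) (t : ℝ) (ht : 0 ≤ t) :
    ∫ x in (0:ℝ)..t, laguerreFun a k x * laguerreFun a m (t - x)
      = (2 * a) ^ (-(1/2 : ℝ)) *
        (laguerreFun a (k + m) t - laguerreFun a (k + m + 1) t) :=
  laguerre_convolution_general a ha k m t
end

section
/- Let ν > 1/2. There exist constants Q̃₁, Q̃₂ > 0 such that for all ℓ ∈ ℕ: Σ_{k=0}^{ℓ} binom(−ν, k)² ≤ Q̃₁ (max(ℓ,1))^{2ν−1} and Σ_{k=0}^{ℓ} Σ_{n=0}^{k} binom(−ν, n)² ≥ Q̃₂ (max(ℓ,1))^{2ν}. -/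
open Real

noncomputable def genBinom (x : ℝ) (k : ℕ) : ℝ :=
  (∏ j ∈ Finset.range k, (x - j)) / (k.factorial)

/-!
Up to sign, `genBinom (-ν) k = ν (ν + 1) ⋯ (ν + k - 1) / k!`, and Euler's limit formula for `Γ`
shows that its ratio to `(k + 1) ^ (ν - 1)` tends to `1 / Γ(ν)`. Since every term is positive,
`genBinom (-ν) k ^ 2` lies between two positive multiples of `(k + 1) ^ (2ν - 2)` for all `k`.
Telescoping Bernoulli's inequality gives `∑_{k<n} (k + 1) ^ (r - 1) ≍ n ^ r` for every `r > 0`;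
applied with `r = 2ν - 1` to the squares and with `r = 2ν` to their partial sums, it yields both
bounds, and `max ℓ 1 ≤ ℓ + 1 ≤ 2 max ℓ 1` accounts for the normalisation.
-/

open Filter Topology Finset
open scoped Nat

lemma exists_bounds_of_tendsto_div {u v : ℕ → ℝ} {L : ℝ} (hu : ∀ n, 0 < u n)
    (hv : ∀ n, 0 < v n) (hL : 0 < L) (h : Tendsto (fun n => u n / v n) atTop (𝓝 L)) :
    ∃ c C : ℝ, 0 < c ∧ 0 < C ∧ ∀ n, c * v n ≤ u n ∧ u n ≤ C * v n := by
  obtain ⟨C, hC⟩ := h.bddAbove_range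
  obtain ⟨D, hD⟩ := (h.inv₀ hL.ne').bddAbove_range
  have hratio (n : ℕ) : 0 < u n / v n := div_pos (hu n) (hv n)
  have hD0 : 0 < D := (inv_pos.2 (hratio 0)).trans_le (hD ⟨0, rfl⟩)
  refine ⟨D⁻¹, C, inv_pos.2 hD0, (hratio 0).trans_le (hC ⟨0, rfl⟩), fun n => ⟨?_, ?_⟩⟩
  · have h := (hD ⟨n, rfl⟩ : (u n / v n)⁻¹ ≤ D)
    rw [inv_div, div_le_iff₀ (hu n)] at h
    rwa [inv_mul_le_iff₀ hD0]
  · exact (div_le_iff₀ (hv n)).1 (hC ⟨n, rfl⟩)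

lemma sub_one_rpow_eq_rpow_mul {p x : ℝ} (hx : 1 ≤ x) :
    (x - 1) ^ p = x ^ p * (1 + -x⁻¹) ^ p := by
  have hx0 : 0 < x := by linarith
  rw [← mul_rpow hx0.le (by linarith [inv_le_one_of_one_le₀ hx]), mul_add, mul_neg,
    mul_inv_cancel₀ hx0.ne', mul_one, sub_eq_add_neg]

lemma rpow_sub_rpow_sub_one_le {p x : ℝ} (hp : 1 ≤ p) (hx : 1 ≤ x) :
    x ^ p - (x - 1) ^ p ≤ p * x ^ (p - 1) := by
  have hx0 : 0 < x := by linarith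
  have h := mul_le_mul_of_nonneg_left
    (one_add_mul_self_le_rpow_one_add (neg_le_neg (inv_le_one_of_one_le₀ hx)) hp)
    (rpow_nonneg hx0.le p)
  rw [sub_one_rpow_eq_rpow_mul hx, rpow_sub_one hx0.ne']
  linarith [show x ^ p * (1 + p * -x⁻¹) = x ^ p - p * (x ^ p / x) by ring]

lemma mul_rpow_sub_one_le_rpow_sub_rpow_sub_one {p x : ℝ} (hp₀ : 0 ≤ p) (hp₁ : p ≤ 1)
    (hx : 1 ≤ x) : p * x ^ (p - 1) ≤ x ^ p - (x - 1) ^ p := by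
  have hx0 : 0 < x := by linarith
  have h := mul_le_mul_of_nonneg_left
    (rpow_one_add_le_one_add_mul_self (neg_le_neg (inv_le_one_of_one_le₀ hx)) hp₀ hp₁)
    (rpow_nonneg hx0.le p)
  rw [sub_one_rpow_eq_rpow_mul hx, rpow_sub_one hx0.ne']
  linarith [show x ^ p * (1 + p * -x⁻¹) = x ^ p - p * (x ^ p / x) by ring]

lemma sum_range_add_one_rpow_sub_rpow {r : ℝ} (hr : r ≠ 0) (n : ℕ) :
    ∑ k ∈ range n, (((k : ℝ) + 1) ^ r - (k : ℝ) ^ r) = (n : ℝ) ^ r := by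
  have h := sum_range_sub (fun k : ℕ => (k : ℝ) ^ r) n
  push_cast at h
  rw [h, zero_rpow hr, sub_zero]

lemma exists_sum_range_rpow_bounds {r : ℝ} (hr : 0 < r) :
    ∃ c C : ℝ, 0 < c ∧ 0 < C ∧ ∀ n : ℕ,
      c * (n : ℝ) ^ r ≤ ∑ k ∈ range n, ((k : ℝ) + 1) ^ (r - 1) ∧
        ∑ k ∈ range n, ((k : ℝ) + 1) ^ (r - 1) ≤ C * (n : ℝ) ^ r := by
  have htel := sum_range_add_one_rpow_sub_rpow hr.ne'
  have hconst (n : ℕ) : ∑ _k ∈ range n, (n : ℝ) ^ (r - 1) = (n : ℝ) ^ r := by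
    rcases n.eq_zero_or_pos with rfl | hn
    · simp [zero_rpow hr.ne']
    · rw [sum_const, card_range, nsmul_eq_mul, rpow_sub_one (by positivity)]
      field_simp
  have hle {n k : ℕ} (hk : k ∈ range n) : (k : ℝ) + 1 ≤ n := by
    exact_mod_cast mem_range.1 hk
  have hone (k : ℕ) : (1 : ℝ) ≤ k + 1 := by simp
  rcases le_total 1 r with h1 | h1
  · refine ⟨r⁻¹, 1, by positivity, one_pos, fun n => ⟨?_, ?_⟩⟩
    · rw [← htel n, inv_mul_le_iff₀ hr, mul_sum]
      exact sum_le_sum fun k _ => by simpa using rpow_sub_rpow_sub_one_le h1 (hone k)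
    · rw [one_mul, ← hconst n]
      exact sum_le_sum fun k hk => rpow_le_rpow (by positivity) (hle hk) (by linarith)
  · refine ⟨1, r⁻¹, one_pos, by positivity, fun n => ⟨?_, ?_⟩⟩
    · rw [one_mul, ← hconst n]
      exact sum_le_sum fun k hk => rpow_le_rpow_of_nonpos (by positivity) (hle hk) (by linarith)
    · rw [← htel n, le_inv_mul_iff₀ hr, mul_sum]
      exact sum_le_sum fun k _ => by
        simpa using mul_rpow_sub_one_le_rpow_sub_rpow_sub_one hr.le h1 (hone k)

lemma exists_sum_range_bounds_of_rpow_bounds {u : ℕ → ℝ} {r c C : ℝ} (hr : 0 < r) (hc : 0 < c)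
    (hC : 0 < C)
    (hu : ∀ k : ℕ, c * ((k : ℝ) + 1) ^ (r - 1) ≤ u k ∧ u k ≤ C * ((k : ℝ) + 1) ^ (r - 1)) :
    ∃ c' C' : ℝ, 0 < c' ∧ 0 < C' ∧ ∀ n : ℕ,
      c' * (n : ℝ) ^ r ≤ ∑ k ∈ range n, u k ∧ ∑ k ∈ range n, u k ≤ C' * (n : ℝ) ^ r := by
  obtain ⟨d, D, hd, hD, hs⟩ := exists_sum_range_rpow_bounds hr
  refine ⟨c * d, C * D, by positivity, by positivity, fun n => ⟨?_, ?_⟩⟩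
  · calc c * d * (n : ℝ) ^ r ≤ c * ∑ k ∈ range n, ((k : ℝ) + 1) ^ (r - 1) := by
          rw [mul_assoc]; gcongr; exact (hs n).1
      _ ≤ ∑ k ∈ range n, u k := by rw [mul_sum]; exact sum_le_sum fun k _ => (hu k).1
  · calc ∑ k ∈ range n, u k ≤ C * ∑ k ∈ range n, ((k : ℝ) + 1) ^ (r - 1) := by
          rw [mul_sum]; exact sum_le_sum fun k _ => (hu k).2
      _ ≤ C * D * (n : ℝ) ^ r := by rw [mul_assoc]; gcongr; exact (hs n).2

lemma genBinom_neg_sq (ν : ℝ) (k : ℕ) :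
    genBinom (-ν) k ^ 2 = ((∏ j ∈ range k, (ν + j)) / k !) ^ 2 := by
  have hsign : ∏ j ∈ range k, (-ν - j) = (-1) ^ k * ∏ j ∈ range k, (ν + j) := by
    calc ∏ j ∈ range k, (-ν - j) = ∏ j ∈ range k, (-1 * (ν + j)) :=
          prod_congr rfl fun j _ => by ring
      _ = (-1) ^ k * ∏ j ∈ range k, (ν + j) := by rw [prod_mul_distrib, prod_const, card_range]
  rw [genBinom, hsign, mul_div_assoc, mul_pow, ← pow_mul, pow_mul', neg_one_sq, one_pow, one_mul]

lemma prod_add_div_factorial_eq_rpow_div_GammaSeq {ν : ℝ} (hν : 0 < ν) {n : ℕ} (hn : n ≠ 0) :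
    (∏ j ∈ range (n + 1), (ν + j)) / (n + 1)! = (n : ℝ) ^ ν / ((n + 1) * GammaSeq ν n) := by
  have hP : 0 < ∏ j ∈ range (n + 1), (ν + j) := prod_pos fun j _ => by positivity
  have hnν : 0 < (n : ℝ) ^ ν := by positivity
  unfold GammaSeq
  rw [Nat.factorial_succ]
  push_cast
  field_simp

lemma tendsto_prod_add_div_factorial_div_rpow {ν : ℝ} (hν : 0 < ν) :
    Tendsto (fun k : ℕ => (∏ j ∈ range k, (ν + j)) / k ! / ((k : ℝ) + 1) ^ (ν - 1)) atTop
      (𝓝 (Gamma ν)⁻¹) := by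
  rw [← tendsto_add_atTop_iff_nat 1]
  have hlim : Tendsto
      (fun n : ℕ => ((n : ℝ) / (n + 2)) ^ ν * (1 + 1 / ((n : ℝ) + 1)) / GammaSeq ν n) atTop
      (𝓝 (Gamma ν)⁻¹) := by
    have h1 := ((tendsto_natCast_div_add_atTop (2 : ℝ)).rpow_const (Or.inl one_ne_zero) (p := ν))
    have h2 := (tendsto_one_div_add_atTop_nhds_zero_nat (𝕜 := ℝ)).const_add 1
    have h := (h1.mul h2).div (GammaSeq_tendsto_Gamma ν) (Gamma_pos_of_pos hν).ne'
    rwa [one_rpow, add_zero, one_mul, one_div] at h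
  refine hlim.congr' ((eventually_ne_atTop 0).mono fun n hn => ?_)
  dsimp only
  rw [prod_add_div_factorial_eq_rpow_div_GammaSeq hν hn]
  have hn' : (0 : ℝ) < n := by positivity
  push_cast
  rw [show (n : ℝ) + 1 + 1 = n + 2 by ring, div_rpow hn'.le (by positivity),
    rpow_sub_one (by positivity)]
  field_simp
  ring

-- The exponent `(2ν - 1) - 1` is the `r - 1` of `exists_sum_range_bounds_of_rpow_bounds`.
lemma exists_genBinom_neg_sq_bounds {ν : ℝ} (hν : 0 < ν) :
    ∃ c C : ℝ, 0 < c ∧ 0 < C ∧ ∀ k : ℕ,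
      c * ((k : ℝ) + 1) ^ (2 * ν - 1 - 1) ≤ genBinom (-ν) k ^ 2 ∧
        genBinom (-ν) k ^ 2 ≤ C * ((k : ℝ) + 1) ^ (2 * ν - 1 - 1) := by
  have hrpow (k : ℕ) : ((k : ℝ) + 1) ^ (2 * ν - 1 - 1) = (((k : ℝ) + 1) ^ (ν - 1)) ^ 2 := by
    rw [← rpow_mul_natCast (by positivity)]
    ring_nf
  simp only [genBinom_neg_sq, hrpow]
  refine exists_bounds_of_tendsto_div (fun k => ?_) (fun k => by positivity)
    (pow_pos (inv_pos.2 (Gamma_pos_of_pos hν)) 2) ?_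
  · have : 0 < ∏ j ∈ range k, (ν + j) := prod_pos fun j _ => by positivity
    positivity
  · simpa only [div_pow] using (tendsto_prod_add_div_factorial_div_rpow hν).pow 2

/-- For `ν > 1/2` there exist `Q̃₁, Q̃₂ > 0` such that for all `ℓ`:
`∑_{k=0}^ℓ binom(−ν,k)² ≤ Q̃₁ (max(ℓ,1))^{2ν−1}` and
`∑_{k=0}^ℓ ∑_{n=0}^k binom(−ν,n)² ≥ Q̃₂ (max(ℓ,1))^{2ν}`. -/
theorem genBinom_sq_sum_bounds (ν : ℝ) (hν : 1 / 2 < ν) :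
    ∃ Q₁ Q₂ : ℝ, 0 < Q₁ ∧ 0 < Q₂ ∧ ∀ ℓ : ℕ,
      (∑ k ∈ Finset.range (ℓ + 1), (genBinom (-ν) k) ^ 2
          ≤ Q₁ * ((max ℓ 1 : ℕ) : ℝ) ^ (2 * ν - 1)) ∧
      (Q₂ * ((max ℓ 1 : ℕ) : ℝ) ^ (2 * ν)
          ≤ ∑ k ∈ Finset.range (ℓ + 1), ∑ n ∈ Finset.range (k + 1), (genBinom (-ν) n) ^ 2) := by
  obtain ⟨c, C, hc, hC, hterm⟩ := exists_genBinom_neg_sq_bounds (by linarith : 0 < ν)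
  obtain ⟨c₁, C₁, hc₁, hC₁, hsum⟩ :=
    exists_sum_range_bounds_of_rpow_bounds (by linarith : 0 < 2 * ν - 1) hc hC hterm
  obtain ⟨c₂, _, hc₂, _, hsum₂⟩ :=
    exists_sum_range_bounds_of_rpow_bounds (by linarith : 0 < 2 * ν) hc₁ hC₁ fun k => by
      simpa using hsum (k + 1)
  refine ⟨C₁ * 2 ^ (2 * ν - 1), c₂, by positivity, hc₂, fun ℓ => ⟨?_, ?_⟩⟩
  · calc ∑ k ∈ range (ℓ + 1), genBinom (-ν) k ^ 2 ≤ C₁ * ((ℓ + 1 : ℕ) : ℝ) ^ (2 * ν - 1) :=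
          (hsum (ℓ + 1)).2
      _ ≤ C₁ * (2 * ((max ℓ 1 : ℕ) : ℝ)) ^ (2 * ν - 1) := by
          gcongr
          · linarith
          · exact_mod_cast (by omega : ℓ + 1 ≤ 2 * max ℓ 1)
      _ = C₁ * 2 ^ (2 * ν - 1) * ((max ℓ 1 : ℕ) : ℝ) ^ (2 * ν - 1) := by
          rw [mul_rpow zero_le_two (Nat.cast_nonneg _), mul_assoc]
  · calc c₂ * ((max ℓ 1 : ℕ) : ℝ) ^ (2 * ν) ≤ c₂ * ((ℓ + 1 : ℕ) : ℝ) ^ (2 * ν) := by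
          gcongr; omega
      _ ≤ _ := (hsum₂ (ℓ + 1)).1
end

section
/- Let ν > 0, Q₁, Q₂ > 0, and let γ : ℕ → ℝ be a sequence such that for all ℓ ∈ ℕ: Σ_{k=0}^{ℓ} γ_k² ≤ Q₂ (max(ℓ,1))^{2ν−1} and Σ_{k=0}^{ℓ} Σ_{n=0}^{k} γ_n² ≥ Q₁ (max(ℓ,1))^{2ν}. Then necessarily Q₁ ≤ (1 + 2^{2ν}/(2ν)) Q₂. -/
open Real

lemma Real.self_le_two_rpow (x : ℝ) : x ≤ (2 : ℝ) ^ x := by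
  rcases lt_or_ge x 0 with hx | hx
  · exact hx.le.trans (rpow_pos_of_pos two_pos x).le
  calc x ≤ (⌊x⌋₊ + 1 : ℕ) := by exact_mod_cast (Nat.lt_floor_add_one x).le
    _ ≤ ((2 ^ ⌊x⌋₊ : ℕ) : ℝ) := by exact_mod_cast Nat.lt_two_pow_self
    _ = (2 : ℝ) ^ (⌊x⌋₊ : ℝ) := by push_cast; rw [rpow_natCast]
    _ ≤ (2 : ℝ) ^ x := rpow_le_rpow_of_exponent_le one_le_two (Nat.floor_le hx)

lemma Real.two_le_one_add_two_rpow_div {x : ℝ} (hx : 0 < x) : 2 ≤ 1 + (2 : ℝ) ^ x / x := by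
  linarith [(one_le_div hx).mpr (self_le_two_rpow x)]

theorem dip_constants_compatible_general (ν Q₁ Q₂ : ℝ) (hν : 0 < ν)
    (γ : ℕ → ℝ)
    (h_upper : ∀ ℓ : ℕ,
      ∑ k ∈ Finset.range (ℓ + 1), (γ k) ^ 2 ≤ Q₂ * ((max ℓ 1 : ℕ) : ℝ) ^ (2 * ν - 1))
    (h_lower : ∀ ℓ : ℕ,
      Q₁ * ((max ℓ 1 : ℕ) : ℝ) ^ (2 * ν)
        ≤ ∑ k ∈ Finset.range (ℓ + 1), ∑ n ∈ Finset.range (k + 1), (γ n) ^ 2) :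
    Q₁ ≤ (1 + 2 ^ (2 * ν) / (2 * ν)) * Q₂ := by
  -- Only `ℓ = 1` is needed: there both powers of `max ℓ 1` equal `1`.
  have h₁ := h_upper 1
  have h_lower₁ := h_lower 1
  simp only [zero_add, Finset.sum_range_succ, Finset.sum_range_zero, Nat.reduceAdd,
    max_self, Nat.cast_one, one_rpow, mul_one] at h₁ h_lower₁
  have hQ₁ : Q₁ ≤ 2 * Q₂ := by linarith [sq_nonneg (γ 1)]
  have hQ₂ : 0 ≤ Q₂ := by linarith [sq_nonneg (γ 0), sq_nonneg (γ 1)]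
  calc Q₁ ≤ 2 * Q₂ := hQ₁
    _ ≤ (1 + 2 ^ (2 * ν) / (2 * ν)) * Q₂ :=
      mul_le_mul_of_nonneg_right (two_le_one_add_two_rpow_div (by linarith)) hQ₂

/-- If a sequence `γ` satisfies the two-sided ill-posedness conditions of degree `ν` with
constants `Q₁, Q₂`, then necessarily `Q₁ ≤ (1 + 2^{2ν}/(2ν)) Q₂`. -/
theorem dip_constants_compatible (ν Q₁ Q₂ : ℝ) (hν : 0 < ν) (hQ₁ : 0 < Q₁) (hQ₂ : 0 < Q₂)
    (γ : ℕ → ℝ)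
    (h_upper : ∀ ℓ : ℕ,
      ∑ k ∈ Finset.range (ℓ + 1), (γ k) ^ 2 ≤ Q₂ * ((max ℓ 1 : ℕ) : ℝ) ^ (2 * ν - 1))
    (h_lower : ∀ ℓ : ℕ,
      Q₁ * ((max ℓ 1 : ℕ) : ℝ) ^ (2 * ν)
        ≤ ∑ k ∈ Finset.range (ℓ + 1), ∑ n ∈ Finset.range (k + 1), (γ n) ^ 2) :
    Q₁ ≤ (1 + 2 ^ (2 * ν) / (2 * ν)) * Q₂ :=
  dip_constants_compatible_general ν Q₁ Q₂ hν γ h_upper h_lower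
end

section
/- There exist universal constants β₀ > 0 and c₀ > 0 such that the following holds for every ℓ ∈ ℕ: if b = (b_0, …, b_ℓ) is a vector of independent standard Gaussian real random variables and B^ℓ = T_ℓ(b) is the (ℓ+1)×(ℓ+1) lower triangular Toeplitz matrix with first column b, then for all t ≥ β₀, P( ‖B^ℓ‖_op > t · ( max(ℓ,1) · log(max(ℓ,2)) )^{1/2} ) ≤ exp(−c₀ t²). -/
/-!
Write `P_v = ∑ₖ vₖ Xᵏ`. The vector `T_ℓ(b) x` consists of the first `ℓ + 1` coefficients of
`P_b P_x`, a polynomial of degree `< n = 2ℓ + 1`, so discrete Parseval at the `n`-th roots of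
unity `ζᵐ` gives `‖T_ℓ(b)‖ ≤ maxₘ |P_b(ζᵐ)|`. The real and imaginary parts of each `P_b(ζᵐ)` are
Gaussian linear forms of variance at most `ℓ + 1`, so the sub-Gaussian tail bound and a union
bound over the `n` points give `P(‖T_ℓ(b)‖ > s) ≤ 4n exp(-s² / (8(ℓ + 1)))`. For
`s² = t² max(ℓ,1) log(max(ℓ,2))` the factor `4n ≤ max(ℓ,2)⁵` is absorbed by the exponential once
`t ≥ 16`, leaving `exp(-(log 2 / 32) t²)`.
-/

open MeasureTheory ProbabilityTheory

/-- The spectral (operator) norm of a real matrix. -/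
noncomputable def matOpNorm {n m : ℕ} (A : Matrix (Fin n) (Fin m) ℝ) : ℝ :=
  ‖LinearMap.toContinuousLinearMap (Matrix.toEuclideanLin A)‖

/-- The `(ℓ+1)×(ℓ+1)` lower triangular Toeplitz matrix with first column `b`. -/
def toepOfVec {ℓ : ℕ} (b : Fin (ℓ + 1) → ℝ) : Matrix (Fin (ℓ + 1)) (Fin (ℓ + 1)) ℝ :=
  Matrix.of fun i j =>
    if (j : ℕ) ≤ (i : ℕ) then
      b ⟨(i : ℕ) - (j : ℕ), lt_of_le_of_lt (Nat.sub_le _ _) i.isLt⟩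
    else 0

open Finset Polynomial ComplexConjugate
open scoped Matrix NNReal

theorem IsPrimitiveRoot.sum_pow_mul_conj_pow_pow {n : ℕ} {ζ : ℂ} (hζ : IsPrimitiveRoot ζ n)
    {k j : ℕ} (hk : k < n) (hj : j < n) :
    ∑ m ∈ range n, (ζ ^ k * conj (ζ ^ j)) ^ m = if k = j then (n : ℂ) else 0 := by
  have hunit : ∀ i, ζ ^ i * conj (ζ ^ i) = 1 := fun i => by
    rw [Complex.mul_conj', norm_pow, hζ.norm'_eq_one (by omega)]; simp
  split_ifs with hkj
  · rw [hkj, hunit j]; simp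
  have hpow : (ζ ^ k * conj (ζ ^ j)) ^ n = 1 := by
    rw [mul_pow, ← map_pow, ← pow_mul, ← pow_mul, mul_comm k, mul_comm j, pow_mul, pow_mul,
      hζ.pow_eq_one]
    simp
  have hne : ζ ^ k * conj (ζ ^ j) ≠ 1 := fun h =>
    hkj <| hζ.pow_inj hk hj <| by linear_combination ζ ^ j * h - ζ ^ k * hunit j
  rw [geom_sum_eq hne, hpow, sub_self, zero_div]

theorem IsPrimitiveRoot.sum_norm_sq_eval_pow {n : ℕ} {ζ : ℂ} (hζ : IsPrimitiveRoot ζ n)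
    {p : ℂ[X]} (hp : p.natDegree < n) :
    ∑ m ∈ range n, ‖p.eval (ζ ^ m)‖ ^ 2 = n * ∑ k ∈ range n, ‖p.coeff k‖ ^ 2 := by
  apply Complex.ofReal_injective
  push_cast
  simp_rw [← Complex.mul_conj', eval_eq_sum_range' hp, map_sum, map_mul, sum_mul_sum, mul_sum]
  rw [sum_comm]
  refine sum_congr rfl fun k hk => ?_
  rw [sum_comm]
  have hortho : ∀ j ∈ range n,
      ∑ m ∈ range n, p.coeff k * (ζ ^ m) ^ k * (conj (p.coeff j) * conj ((ζ ^ m) ^ j))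
        = if k = j then n * (p.coeff k * conj (p.coeff j)) else 0 := fun j hj => by
    have hsummand : ∀ m, p.coeff k * (ζ ^ m) ^ k * (conj (p.coeff j) * conj ((ζ ^ m) ^ j))
        = p.coeff k * conj (p.coeff j) * (ζ ^ k * conj (ζ ^ j)) ^ m := fun m => by
      simp only [map_pow]; ring
    simp_rw [hsummand, ← mul_sum, hζ.sum_pow_mul_conj_pow_pow (mem_range.1 hk) (mem_range.1 hj)]
    split_ifs <;> simp [mul_comm]
  rw [sum_congr rfl hortho, sum_ite_eq, if_pos hk]

theorem IsPrimitiveRoot.sum_norm_sq_aeval_pow {n : ℕ} {ζ : ℂ} (hζ : IsPrimitiveRoot ζ n)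
    {p : ℝ[X]} (hp : p.natDegree < n) :
    ∑ m ∈ range n, ‖aeval (ζ ^ m) p‖ ^ 2 = n * ∑ k ∈ range n, p.coeff k ^ 2 := by
  have := hζ.sum_norm_sq_eval_pow (p := p.map (algebraMap ℝ ℂ)) (by rwa [natDegree_map])
  simpa [aeval_def, eval_map, coeff_map] using this

lemma toepOfVec_mulVec_apply {ℓ : ℕ} (b x : Fin (ℓ + 1) → ℝ) (i : Fin (ℓ + 1)) :
    (toepOfVec b *ᵥ x) i = (ofFn (ℓ + 1) b * ofFn (ℓ + 1) x).coeff i := by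
  have hrange : (range (ℓ + 1)).filter (· ≤ (i : ℕ)) = range (i + 1) := by
    ext k; simp only [mem_filter, mem_range]; omega
  rw [Matrix.mulVec, dotProduct, mul_comm, coeff_mul, Nat.sum_antidiagonal_eq_sum_range_succ
    (fun k c => (ofFn (ℓ + 1) x).coeff k * (ofFn (ℓ + 1) b).coeff c), ← hrange, sum_filter,
    ← Fin.sum_univ_eq_sum_range (fun k => if k ≤ (i : ℕ)
      then (ofFn (ℓ + 1) x).coeff k * (ofFn (ℓ + 1) b).coeff (i - k) else 0)]
  refine sum_congr rfl fun j _ => ?_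
  simp only [toepOfVec, Matrix.of_apply]
  split_ifs with hji
  · rw [ofFn_coeff_eq_val_of_lt _ j.isLt, ofFn_coeff_eq_val_of_lt _ (by omega), mul_comm]
  · rw [zero_mul]

lemma sum_range_sq_coeff_ofFn {N n : ℕ} (hN : N ≤ n) (x : Fin N → ℝ) :
    ∑ k ∈ range n, (ofFn N x).coeff k ^ 2 = ∑ i, x i ^ 2 := by
  rw [← sum_subset (range_subset_range.2 hN) fun k _ hk => by
      rw [ofFn_coeff_eq_zero_of_ge _ (by simpa using hk), sq, zero_mul],
    ← Fin.sum_univ_eq_sum_range (fun k => (ofFn N x).coeff k ^ 2)]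
  simp

lemma sum_sq_toepOfVec_mulVec_le {ℓ n : ℕ} {ζ : ℂ} (hζ : IsPrimitiveRoot ζ n)
    (hn : 2 * ℓ + 1 ≤ n) {b : Fin (ℓ + 1) → ℝ} {K : ℝ}
    (hb : ∀ m < n, ‖aeval (ζ ^ m) (ofFn (ℓ + 1) b)‖ ≤ K) (x : Fin (ℓ + 1) → ℝ) :
    ∑ i, (toepOfVec b *ᵥ x) i ^ 2 ≤ K ^ 2 * ∑ i, x i ^ 2 := by
  set P := ofFn (ℓ + 1) b
  set Q := ofFn (ℓ + 1) x
  have hP : P.natDegree ≤ ℓ := Nat.le_of_lt_succ (ofFn_natDegree_lt (by omega) b)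
  have hQ : Q.natDegree ≤ ℓ := Nat.le_of_lt_succ (ofFn_natDegree_lt (by omega) x)
  have hPQ : (P * Q).natDegree < n := natDegree_mul_le.trans_lt (by omega)
  have hn0 : (0 : ℝ) < n := by exact_mod_cast (show 0 < n by omega)
  refine le_of_mul_le_mul_left ?_ hn0
  calc (n : ℝ) * ∑ i, (toepOfVec b *ᵥ x) i ^ 2
      ≤ n * ∑ k ∈ range n, (P * Q).coeff k ^ 2 := by
        simp only [toepOfVec_mulVec_apply]
        rw [Fin.sum_univ_eq_sum_range (fun k => (P * Q).coeff k ^ 2)]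
        gcongr
        omega
    _ = ∑ m ∈ range n, ‖aeval (ζ ^ m) P‖ ^ 2 * ‖aeval (ζ ^ m) Q‖ ^ 2 := by
        simp_rw [← hζ.sum_norm_sq_aeval_pow hPQ, map_mul, norm_mul, mul_pow]
    _ ≤ ∑ m ∈ range n, K ^ 2 * ‖aeval (ζ ^ m) Q‖ ^ 2 := by
        gcongr with m hm
        exact hb m (mem_range.1 hm)
    _ = n * (K ^ 2 * ∑ i, x i ^ 2) := by
        rw [← mul_sum, hζ.sum_norm_sq_aeval_pow (by omega), sum_range_sq_coeff_ofFn (by omega)]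
        ring

theorem matOpNorm_toepOfVec_le {ℓ n : ℕ} {ζ : ℂ} (hζ : IsPrimitiveRoot ζ n)
    (hn : 2 * ℓ + 1 ≤ n) {b : Fin (ℓ + 1) → ℝ} {K : ℝ}
    (hb : ∀ m < n, ‖aeval (ζ ^ m) (ofFn (ℓ + 1) b)‖ ≤ K) :
    matOpNorm (toepOfVec b) ≤ K := by
  have hK : 0 ≤ K := (norm_nonneg _).trans (hb 0 (by omega))
  refine ContinuousLinearMap.opNorm_le_bound _ hK fun x => ?_
  rw [← pow_le_pow_iff_left₀ (norm_nonneg _) (by positivity) two_ne_zero, mul_pow,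
    EuclideanSpace.real_norm_sq_eq, EuclideanSpace.real_norm_sq_eq]
  exact sum_sq_toepOfVec_mulVec_le hζ hn hb x

lemma ProbabilityTheory.HasSubgaussianMGF.mono {Ω : Type*} [MeasurableSpace Ω] {μ : Measure Ω}
    {X : Ω → ℝ} {c c' : ℝ≥0} (h : HasSubgaussianMGF X c μ) (hc : c ≤ c') :
    HasSubgaussianMGF X c' μ :=
  ⟨h.integrable_exp_mul, fun t => (h.mgf_le t).trans (Real.exp_le_exp.2 (by gcongr))⟩

lemma ProbabilityTheory.hasSubgaussianMGF_const_mul_gaussianReal (a : ℝ) :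
    HasSubgaussianMGF (fun x => a * x) (‖a‖₊ ^ 2) (gaussianReal 0 1) where
  integrable_exp_mul t := by
    simpa [mul_assoc] using integrable_exp_mul_gaussianReal (μ := 0) (v := 1) (t * a)
  mgf_le t := by
    rw [mgf_const_mul, mgf_fun_id_gaussianReal]
    simp [mul_pow]

lemma ProbabilityTheory.hasSubgaussianMGF_sum_mul_pi_gaussianReal {ι : Type*} [Fintype ι]
    (a : ι → ℝ) :
    HasSubgaussianMGF (fun b : ι → ℝ => ∑ i, a i * b i) (∑ i, ‖a i‖₊ ^ 2)
      (Measure.pi fun _ => gaussianReal 0 1) := by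
  refine HasSubgaussianMGF.sum_of_iIndepFun
    (iIndepFun_pi (X := fun i x => a i * x) fun _ => by fun_prop) fun i _ => ?_
  have h := hasSubgaussianMGF_const_mul_gaussianReal (a i)
  rw [← (measurePreserving_eval (fun _ : ι => gaussianReal 0 1) i).map_eq] at h
  exact h.of_map (measurable_pi_apply i).aemeasurable

section GaussianTail

variable {ι : Type*} [Fintype ι]

lemma measureReal_le_abs_sum_mul_le {a : ι → ℝ} (ha : ∀ i, |a i| ≤ 1) {s : ℝ} (hs : 0 ≤ s) :
    (Measure.pi fun _ : ι => gaussianReal 0 1).real {b | s ≤ |∑ i, a i * b i|}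
      ≤ 2 * Real.exp (-(s ^ 2 / (2 * Fintype.card ι))) := by
  have hc : ∑ i, ‖a i‖₊ ^ 2 ≤ (Fintype.card ι : ℝ≥0) := by
    simpa using sum_le_card_nsmul univ (fun i => ‖a i‖₊ ^ 2) 1 fun i _ =>
      pow_le_one₀ (by positivity) (by simpa [← NNReal.coe_le_coe] using ha i)
  have h := (hasSubgaussianMGF_sum_mul_pi_gaussianReal a).mono hc
  have hset : {b : ι → ℝ | s ≤ |∑ i, a i * b i|}
      = {b | s ≤ ∑ i, a i * b i} ∪ {b | s ≤ (-fun b : ι → ℝ => ∑ i, a i * b i) b} := by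
    ext b
    simp [le_abs]
  rw [hset]
  refine (measureReal_union_le _ _).trans ?_
  have h1 := h.measure_ge_le hs
  have h2 := h.neg.measure_ge_le hs
  simp only [NNReal.coe_natCast, neg_div] at h1 h2
  linarith

lemma measureReal_le_norm_sum_mul_le {w : ι → ℂ} (hw : ∀ i, ‖w i‖ ≤ 1) {s : ℝ} (hs : 0 ≤ s) :
    (Measure.pi fun _ : ι => gaussianReal 0 1).real {b | s ≤ ‖∑ i, (b i : ℂ) * w i‖}
      ≤ 4 * Real.exp (-(s ^ 2 / (8 * Fintype.card ι))) := by
  have hsub : {b : ι → ℝ | s ≤ ‖∑ i, (b i : ℂ) * w i‖}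
      ⊆ {b | s / 2 ≤ |∑ i, (w i).re * b i|} ∪ {b | s / 2 ≤ |∑ i, (w i).im * b i|} := by
    intro b hb
    have hre : (∑ i, (b i : ℂ) * w i).re = ∑ i, (w i).re * b i := by
      simp [Complex.re_sum, mul_comm]
    have him : (∑ i, (b i : ℂ) * w i).im = ∑ i, (w i).im * b i := by
      simp [Complex.im_sum, mul_comm]
    have := hb.trans (Complex.norm_le_abs_re_add_abs_im _)
    rw [hre, him] at this
    rcases le_or_gt (s / 2) |∑ i, (w i).re * b i| with h | h
    · exact Or.inl h
    · exact Or.inr (show s / 2 ≤ _ by linarith)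
  have hhalf : ∀ a : ι → ℝ, (∀ i, |a i| ≤ 1) →
      (Measure.pi fun _ : ι => gaussianReal 0 1).real {b | s / 2 ≤ |∑ i, a i * b i|}
        ≤ 2 * Real.exp (-(s ^ 2 / (8 * Fintype.card ι))) := fun a ha => by
    have h := measureReal_le_abs_sum_mul_le ha (s := s / 2) (by positivity)
    rwa [show (s / 2) ^ 2 / (2 * Fintype.card ι) = s ^ 2 / (8 * Fintype.card ι) by ring] at h
  calc _ ≤ _ := measureReal_mono hsub
    _ ≤ _ := measureReal_union_le _ _
    _ ≤ _ := add_le_add (hhalf _ fun i => (Complex.abs_re_le_norm _).trans (hw i))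
        (hhalf _ fun i => (Complex.abs_im_le_norm _).trans (hw i))
    _ = _ := by ring

end GaussianTail

lemma aeval_ofFn {N : ℕ} (b : Fin N → ℝ) (z : ℂ) :
    aeval z (ofFn N b) = ∑ i, (b i : ℂ) * z ^ (i : ℕ) := by
  simp [ofFn_eq_sum_monomial, aeval_monomial]

lemma measureReal_exists_le_norm_aeval_ofFn_le {N n : ℕ} {z : ℕ → ℂ} (hz : ∀ m < n, ‖z m‖ ≤ 1)
    {s : ℝ} (hs : 0 ≤ s) :
    (Measure.pi fun _ : Fin N => gaussianReal 0 1).real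
        {b | ∃ m < n, s ≤ ‖aeval (z m) (ofFn N b)‖}
      ≤ n * (4 * Real.exp (-(s ^ 2 / (8 * N)))) := by
  have hunion : {b : Fin N → ℝ | ∃ m < n, s ≤ ‖aeval (z m) (ofFn N b)‖}
      = ⋃ m ∈ range n, {b : Fin N → ℝ | s ≤ ‖∑ i, (b i : ℂ) * z m ^ (i : ℕ)‖} := by
    ext b
    simp [aeval_ofFn]
  rw [hunion]
  calc _ ≤ _ := measureReal_biUnion_finset_le _ _
    _ ≤ ∑ _m ∈ range n, 4 * Real.exp (-(s ^ 2 / (8 * N))) := sum_le_sum fun m hm => by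
        simpa using measureReal_le_norm_sum_mul_le (w := fun i : Fin N => z m ^ (i : ℕ))
          (fun i => by simpa using pow_le_one₀ (norm_nonneg _) (hz m (mem_range.1 hm))) hs
    _ = _ := by simp

lemma toeplitz_tail_estimate (ℓ : ℕ) {t : ℝ} (ht : 16 ≤ t) :
    ((2 * ℓ + 1 : ℕ) : ℝ) * (4 * Real.exp (-((t * √(((max ℓ 1 : ℕ) : ℝ) *
        Real.log ((max ℓ 2 : ℕ) : ℝ))) ^ 2 / (8 * ((ℓ + 1 : ℕ) : ℝ)))))
      ≤ Real.exp (-(Real.log 2 / 32 * t ^ 2)) := by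
  have hK2 : (2 : ℝ) ≤ (max ℓ 2 : ℕ) := by exact_mod_cast le_max_right ℓ 2
  have hℓK : (ℓ : ℝ) ≤ (max ℓ 2 : ℕ) := by exact_mod_cast le_max_left ℓ 2
  have hℓM : ((ℓ + 1 : ℕ) : ℝ) ≤ 2 * (max ℓ 1 : ℕ) := by
    have : ℓ + 1 ≤ 2 * max ℓ 1 := by omega
    exact_mod_cast this
  set K : ℝ := ((max ℓ 2 : ℕ) : ℝ)
  set M : ℝ := ((max ℓ 1 : ℕ) : ℝ)
  have hL2 : Real.log 2 ≤ Real.log K := Real.log_le_log (by norm_num) hK2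
  have hlog2 : 0 < Real.log 2 := Real.log_pos (by norm_num)
  have hexponent : t ^ 2 * Real.log K / 16
      ≤ (t * √(M * Real.log K)) ^ 2 / (8 * ((ℓ + 1 : ℕ) : ℝ)) := by
    rw [mul_pow, Real.sq_sqrt (by positivity), div_le_div_iff₀ (by norm_num) (by positivity)]
    nlinarith [mul_le_mul_of_nonneg_left hℓM (show 0 ≤ 8 * t ^ 2 * Real.log K by positivity)]
  have hprefactor : ((2 * ℓ + 1 : ℕ) : ℝ) * 4 ≤ Real.exp (5 * Real.log K) := by
    rw [show (5 : ℝ) = (5 : ℕ) by norm_num, Real.exp_nat_mul, Real.exp_log (by positivity)]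
    push_cast
    nlinarith [pow_le_pow_left₀ (by norm_num) hK2 4]
  calc ((2 * ℓ + 1 : ℕ) : ℝ) * (4 * Real.exp (-((t * √(M * Real.log K)) ^ 2
        / (8 * ((ℓ + 1 : ℕ) : ℝ)))))
      ≤ Real.exp (5 * Real.log K) * Real.exp (-(t ^ 2 * Real.log K / 16)) := by
        rw [← mul_assoc]
        gcongr
    _ = Real.exp (-((t ^ 2 / 16 - 5) * Real.log K)) := by rw [← Real.exp_add]; ring_nf
    _ ≤ Real.exp (-(Real.log 2 / 32 * t ^ 2)) := by
        refine Real.exp_le_exp.2 (neg_le_neg ?_)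
        have ht2 : t ^ 2 / 32 ≤ t ^ 2 / 16 - 5 := by nlinarith
        nlinarith [mul_le_mul_of_nonneg_left hL2 (show 0 ≤ t ^ 2 / 32 by positivity),
          mul_le_mul_of_nonneg_right ht2 (hlog2.le.trans hL2)]

/-- Concentration of the operator norm of a Gaussian lower triangular Toeplitz matrix:
there are universal `β₀, c₀ > 0` such that for every `ℓ` and every `t ≥ β₀`, if the first
column is a standard Gaussian vector then
`P(‖B^ℓ‖_op > t (max(ℓ,1) log(max(ℓ,2)))^{1/2}) ≤ exp(−c₀ t²)`. -/
theorem gaussian_toeplitz_opNorm_concentration :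
    ∃ β₀ c₀ : ℝ, 0 < β₀ ∧ 0 < c₀ ∧ ∀ ℓ : ℕ, ∀ t : ℝ, β₀ ≤ t →
      (Measure.pi fun _ : Fin (ℓ + 1) => gaussianReal 0 1)
          {b | t * Real.sqrt (((max ℓ 1 : ℕ) : ℝ) * Real.log ((max ℓ 2 : ℕ) : ℝ))
                < matOpNorm (toepOfVec b)}
        ≤ ENNReal.ofReal (Real.exp (-(c₀ * t ^ 2))) := by
  refine ⟨16, Real.log 2 / 32, by norm_num, by positivity, fun ℓ t ht => ?_⟩
  set s := t * √(((max ℓ 1 : ℕ) : ℝ) * Real.log ((max ℓ 2 : ℕ) : ℝ))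
  have hs : 0 ≤ s := mul_nonneg (by linarith) (Real.sqrt_nonneg _)
  obtain ⟨ζ, hζ⟩ : ∃ ζ : ℂ, IsPrimitiveRoot ζ (2 * ℓ + 1) :=
    ⟨_, Complex.isPrimitiveRoot_exp _ (by omega)⟩
  have hsub : {b | s < matOpNorm (toepOfVec b)}
      ⊆ {b | ∃ m < 2 * ℓ + 1, s ≤ ‖aeval (ζ ^ m) (ofFn (ℓ + 1) b)‖} := fun b hb =>
    by_contra fun h => hb.not_ge <|
      matOpNorm_toepOfVec_le hζ le_rfl fun m hm => (not_le.1 fun hle => h ⟨m, hm, hle⟩).le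
  have hζm : ∀ m < 2 * ℓ + 1, ‖ζ ^ m‖ ≤ 1 := fun m _ => by
    rw [norm_pow, hζ.norm'_eq_one (by omega), one_pow]
  calc _ ≤ _ := measure_mono hsub
    _ = ENNReal.ofReal _ := (ofReal_measureReal).symm
    _ ≤ _ := ENNReal.ofReal_le_ofReal <|
      (measureReal_exists_le_norm_aeval_ofFn_le hζm hs).trans (toeplitz_tail_estimate ℓ ht)
end

section
/- There exists a universal constant C > 0 such that for every integer ℓ ≥ 2, if b_0, …, b_ℓ are independent standard Gaussian real random variables, then E[ sup_{x ∈ [0,1]} | Σ_{k=0}^{ℓ} b_k e^{2πi k x} | ] ≤ C (ℓ log ℓ)^{1/2}, where the sum is a complex number and |·| is its modulus. -/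
/-!
Discretize `[0, 1]` by the net `j / N`, `j ≤ N`. Between net points the polynomial moves by at
most `2πn/N · ∑ |b_k|`, and at a net point its real and imaginary parts are centred Gaussians of
variance at most `n = ℓ + 1`. The maximum of these `2(N + 1)` Gaussians is controlled by the
soft-max bound `|u| ≤ a + 2 e^{-λa} cosh (λu) / λ`, whose expectation is explicit because
`E[cosh (λ ⟪v, b⟫)] = exp (λ² ‖v‖² / 2)`. With `N = n²`, `λ = √(log ℓ / ℓ)` and
`a = 3 √(ℓ log ℓ)`, the factor `e^{-λa} = ℓ⁻³` absorbs both the size of the net and the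
moment `e^{λ²n/2} ≤ ℓ`.
-/

open MeasureTheory ProbabilityTheory Real

section GaussianExponentialMoments

variable {ι J : Type*} [Fintype ι]

lemma integral_exp_mul_gaussianReal_zero_one (t : ℝ) :
    ∫ x, exp (t * x) ∂gaussianReal 0 1 = exp (t ^ 2 / 2) := by
  simpa [mgf] using congrFun (mgf_id_gaussianReal (μ := 0) (v := 1)) t

lemma integrable_exp_sum_mul_pi_gaussianReal (v : ι → ℝ) :
    Integrable (fun b : ι → ℝ => exp (∑ i, v i * b i))
      (Measure.pi fun _ => gaussianReal 0 1) := by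
  simp_rw [exp_sum]
  exact Integrable.fintype_prod fun i => integrable_exp_mul_gaussianReal (v i)

lemma integral_exp_sum_mul_pi_gaussianReal (v : ι → ℝ) :
    ∫ b, exp (∑ i, v i * b i) ∂(Measure.pi fun _ : ι => gaussianReal 0 1) =
      exp ((∑ i, v i ^ 2) / 2) := by
  simp_rw [exp_sum, integral_fintype_prod_eq_prod (fun i x => exp (v i * x)),
    integral_exp_mul_gaussianReal_zero_one, ← exp_sum, Finset.sum_div]

lemma cosh_mul_sum_mul (t : ℝ) (v b : ι → ℝ) :
    cosh (t * ∑ i, v i * b i) =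
      (exp (∑ i, (t * v i) * b i) + exp (∑ i, (-(t * v i)) * b i)) / 2 := by
  simp_rw [cosh_eq, Finset.mul_sum, neg_mul, Finset.sum_neg_distrib, mul_assoc]

lemma integrable_cosh_mul_sum_mul_pi_gaussianReal (t : ℝ) (v : ι → ℝ) :
    Integrable (fun b : ι → ℝ => cosh (t * ∑ i, v i * b i))
      (Measure.pi fun _ => gaussianReal 0 1) := by
  simp_rw [cosh_mul_sum_mul]
  exact ((integrable_exp_sum_mul_pi_gaussianReal _).add
    (integrable_exp_sum_mul_pi_gaussianReal _)).div_const 2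

lemma integral_cosh_mul_sum_mul_pi_gaussianReal (t : ℝ) (v : ι → ℝ) :
    ∫ b, cosh (t * ∑ i, v i * b i) ∂(Measure.pi fun _ : ι => gaussianReal 0 1) =
      exp (t ^ 2 * (∑ i, v i ^ 2) / 2) := by
  simp_rw [cosh_mul_sum_mul]
  rw [integral_div, integral_add (integrable_exp_sum_mul_pi_gaussianReal _)
    (integrable_exp_sum_mul_pi_gaussianReal _), integral_exp_sum_mul_pi_gaussianReal,
    integral_exp_sum_mul_pi_gaussianReal]
  simp_rw [neg_sq, mul_pow, ← Finset.mul_sum]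
  ring

lemma integrable_sum_cosh_pi_gaussianReal (s : Finset J) (t : ℝ) (v : J → ι → ℝ) :
    Integrable (fun b : ι → ℝ => ∑ j ∈ s, cosh (t * ∑ i, v j i * b i))
      (Measure.pi fun _ => gaussianReal 0 1) :=
  integrable_finsetSum s fun j _ => integrable_cosh_mul_sum_mul_pi_gaussianReal t (v j)

lemma integral_sum_cosh_pi_gaussianReal_le (s : Finset J) (t : ℝ) {σ2 : ℝ} (v : J → ι → ℝ)
    (hv : ∀ j ∈ s, ∑ i, v j i ^ 2 ≤ σ2) :
    ∫ b, ∑ j ∈ s, cosh (t * ∑ i, v j i * b i) ∂(Measure.pi fun _ : ι => gaussianReal 0 1) ≤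
      s.card * exp (t ^ 2 * σ2 / 2) := by
  rw [integral_finsetSum s fun j _ => integrable_cosh_mul_sum_mul_pi_gaussianReal t (v j),
    ← nsmul_eq_mul, ← Finset.sum_const]
  refine Finset.sum_le_sum fun j hj => ?_
  rw [integral_cosh_mul_sum_mul_pi_gaussianReal]
  gcongr
  exact hv j hj

lemma integrable_sum_cosh_apply_pi_gaussianReal :
    Integrable (fun b : ι → ℝ => ∑ k, cosh (b k)) (Measure.pi fun _ => gaussianReal 0 1) := by
  classical
  simpa [Pi.single_apply] using
    integrable_sum_cosh_pi_gaussianReal Finset.univ 1 fun k => (Pi.single k 1 : ι → ℝ)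

lemma integral_sum_cosh_apply_pi_gaussianReal_le :
    ∫ b, ∑ k, cosh (b k) ∂(Measure.pi fun _ : ι => gaussianReal 0 1) ≤
      Fintype.card ι * exp (1 / 2) := by
  classical
  simpa [Pi.single_apply] using integral_sum_cosh_pi_gaussianReal_le Finset.univ 1
    (fun k => (Pi.single k 1 : ι → ℝ)) (σ2 := 1) (by simp [Pi.single_apply])

end GaussianExponentialMoments

/-- `λ (|u| - a) ≤ e^{λ(|u| - a)} ≤ e^{-λa} · 2 cosh (λu)`. -/
lemma abs_le_add_cosh {lam : ℝ} (hlam : 0 < lam) (a u : ℝ) :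
    |u| ≤ a + 2 * exp (-(lam * a)) / lam * cosh (lam * u) := by
  have hexp : exp (lam * |u|) ≤ 2 * cosh (lam * u) := by
    rw [← cosh_abs, abs_mul, abs_of_pos hlam, cosh_eq]
    linarith [exp_pos (-(lam * |u|))]
  have hlin : lam * (|u| - a) ≤ exp (-(lam * a)) * exp (lam * |u|) := by
    rw [← exp_add]
    linarith [add_one_le_exp (-(lam * a) + lam * |u|)]
  have hdiv : |u| - a ≤ 2 * exp (-(lam * a)) * cosh (lam * u) / lam := by
    rw [le_div_iff₀ hlam]
    nlinarith [exp_pos (-(lam * a))]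
  rw [div_mul_eq_mul_div]
  linarith

lemma abs_le_two_mul_cosh (u : ℝ) : |u| ≤ 2 * cosh u := by
  simpa using abs_le_add_cosh one_pos 0 u

lemma exists_abs_sub_div_le {N : ℕ} (hN : 0 < N) {x : ℝ} (hx : x ∈ Set.Icc (0 : ℝ) 1) :
    ∃ j ∈ Finset.range (N + 1), |x - j / N| ≤ 1 / N := by
  have hNr : (0 : ℝ) < N := by exact_mod_cast hN
  have hxN : 0 ≤ x * N := mul_nonneg hx.1 hNr.le
  refine ⟨⌊x * N⌋₊, ?_, ?_⟩
  · exact Finset.mem_range_succ_iff.2 (Nat.floor_le_of_le (by nlinarith [hx.2]))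
  · have hlow : (⌊x * N⌋₊ : ℝ) / N ≤ x := (div_le_iff₀ hNr).2 (Nat.floor_le hxN)
    have hupp : x < (⌊x * N⌋₊ + 1 : ℝ) / N := (lt_div_iff₀ hNr).2 (Nat.lt_floor_add_one _)
    rw [add_div] at hupp
    rw [abs_le]
    constructor <;> linarith [one_div_pos.2 hNr]

noncomputable def trigPoly {n : ℕ} (b : Fin n → ℝ) (x : ℝ) : ℂ :=
  ∑ k : Fin n, (b k : ℂ) * Complex.exp (2 * π * Complex.I * (k : ℕ) * x)

section TrigPoly

variable {n : ℕ} (b : Fin n → ℝ)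

lemma trigPoly_eq (x : ℝ) :
    trigPoly b x =
      ∑ k : Fin n, (b k : ℂ) * Complex.exp (((2 * π * k * x : ℝ) : ℂ) * Complex.I) := by
  unfold trigPoly
  congr! 3
  push_cast
  ring

lemma trigPoly_re (x : ℝ) : (trigPoly b x).re = ∑ k : Fin n, cos (2 * π * k * x) * b k := by
  simp only [trigPoly_eq, Complex.re_sum, Complex.re_ofReal_mul, Complex.exp_ofReal_mul_I_re]
  exact Finset.sum_congr rfl fun k _ => mul_comm _ _

lemma trigPoly_im (x : ℝ) : (trigPoly b x).im = ∑ k : Fin n, sin (2 * π * k * x) * b k := by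
  simp only [trigPoly_eq, Complex.im_sum, Complex.im_ofReal_mul, Complex.exp_ofReal_mul_I_im]
  exact Finset.sum_congr rfl fun k _ => mul_comm _ _

lemma norm_trigPoly_sub_le (x y : ℝ) :
    ‖trigPoly b x - trigPoly b y‖ ≤ 2 * π * n * |x - y| * ∑ k, |b k| := by
  rw [trigPoly_eq, trigPoly_eq, ← Finset.sum_sub_distrib, Finset.mul_sum]
  refine (norm_sum_le _ _).trans (Finset.sum_le_sum fun k _ => ?_)
  have hk : (k : ℝ) ≤ n := by exact_mod_cast k.isLt.le
  have hrot : Complex.exp (((2 * π * k * x : ℝ) : ℂ) * Complex.I)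
      - Complex.exp (((2 * π * k * y : ℝ) : ℂ) * Complex.I)
      = Complex.exp (((2 * π * k * y : ℝ) : ℂ) * Complex.I) *
        (Complex.exp (Complex.I * ((2 * π * k * (x - y) : ℝ) : ℂ)) - 1) := by
    rw [mul_sub, ← Complex.exp_add, mul_one]
    push_cast
    ring_nf
  rw [← mul_sub, hrot, norm_mul, norm_mul, Complex.norm_exp_ofReal_mul_I, one_mul,
    Complex.norm_real, Real.norm_eq_abs]
  refine (mul_le_mul_of_nonneg_left norm_exp_I_mul_ofReal_sub_one_le (abs_nonneg _)).trans ?_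
  rw [Real.norm_eq_abs, abs_mul, abs_of_nonneg (by positivity : 0 ≤ 2 * π * k), mul_comm]
  gcongr

end TrigPoly

noncomputable def trigPolyMajorant {n : ℕ} (N : ℕ) (lam a : ℝ) (b : Fin n → ℝ) : ℝ :=
  2 * a + 2 * exp (-(lam * a)) / lam *
      (∑ j ∈ Finset.range (N + 1), cosh (lam * (trigPoly b (j / N)).re) +
        ∑ j ∈ Finset.range (N + 1), cosh (lam * (trigPoly b (j / N)).im)) +
    4 * π * n / N * ∑ k, cosh (b k)

section TrigPolyMajorant

variable {n : ℕ}

lemma norm_trigPoly_le_majorant {N : ℕ} (hN : 0 < N) {lam : ℝ} (hlam : 0 < lam) (a : ℝ)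
    (b : Fin n → ℝ) {x : ℝ} (hx : x ∈ Set.Icc (0 : ℝ) 1) :
    ‖trigPoly b x‖ ≤ trigPolyMajorant N lam a b := by
  obtain ⟨j, hj, hxj⟩ := exists_abs_sub_div_le hN hx
  set y : ℝ := j / N
  have hnet : ‖trigPoly b y‖ ≤ 2 * a + 2 * exp (-(lam * a)) / lam *
      (∑ j ∈ Finset.range (N + 1), cosh (lam * (trigPoly b (j / N)).re) +
        ∑ j ∈ Finset.range (N + 1), cosh (lam * (trigPoly b (j / N)).im)) := by
    have hre := Finset.single_le_sum (fun i _ => (one_pos.trans_le (one_le_cosh _)).le) hj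
      (f := fun i : ℕ => cosh (lam * (trigPoly b (i / N)).re))
    have him := Finset.single_le_sum (fun i _ => (one_pos.trans_le (one_le_cosh _)).le) hj
      (f := fun i : ℕ => cosh (lam * (trigPoly b (i / N)).im))
    calc ‖trigPoly b y‖ ≤ |(trigPoly b y).re| + |(trigPoly b y).im| :=
          Complex.norm_le_abs_re_add_abs_im _
      _ ≤ (a + 2 * exp (-(lam * a)) / lam * cosh (lam * (trigPoly b y).re)) +
          (a + 2 * exp (-(lam * a)) / lam * cosh (lam * (trigPoly b y).im)) :=
          add_le_add (abs_le_add_cosh hlam a _) (abs_le_add_cosh hlam a _)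
      _ ≤ _ := by
          rw [add_add_add_comm, ← two_mul, ← mul_add]
          gcongr
  have hlip : ‖trigPoly b x - trigPoly b y‖ ≤ 4 * π * n / N * ∑ k, cosh (b k) :=
    calc ‖trigPoly b x - trigPoly b y‖ ≤ 2 * π * n * |x - y| * ∑ k, |b k| :=
          norm_trigPoly_sub_le b x y
      _ ≤ 2 * π * n * (1 / N) * ∑ k, 2 * cosh (b k) := by
          gcongr with k
          exact abs_le_two_mul_cosh (b k)
      _ = 4 * π * n / N * ∑ k, cosh (b k) := by
          rw [← Finset.mul_sum]
          ring
  calc ‖trigPoly b x‖ ≤ ‖trigPoly b y‖ + ‖trigPoly b x - trigPoly b y‖ :=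
        norm_le_norm_add_norm_sub' _ _
    _ ≤ _ := add_le_add hnet hlip

lemma integrable_trigPolyMajorant (N : ℕ) (lam a : ℝ) :
    Integrable (trigPolyMajorant (n := n) N lam a) (Measure.pi fun _ => gaussianReal 0 1) := by
  unfold trigPolyMajorant
  simp_rw [trigPoly_re, trigPoly_im]
  exact ((integrable_const _).add
    (((integrable_sum_cosh_pi_gaussianReal _ _ _).add
      (integrable_sum_cosh_pi_gaussianReal _ _ _)).const_mul _)).add
    (integrable_sum_cosh_apply_pi_gaussianReal.const_mul _)

lemma integral_trigPolyMajorant_le (N : ℕ) {lam : ℝ} (hlam : 0 < lam) (a : ℝ) :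
    ∫ b, trigPolyMajorant N lam a b ∂(Measure.pi fun _ : Fin n => gaussianReal 0 1) ≤
      2 * a + 4 * (N + 1) * exp (lam ^ 2 * n / 2 - lam * a) / lam +
        4 * π * exp (1 / 2) * n ^ 2 / N := by
  have hnet_sum : ∀ f : ℕ → Fin n → ℝ, (∀ j k, f j k ^ 2 ≤ 1) →
      ∫ b, ∑ j ∈ Finset.range (N + 1), cosh (lam * ∑ k, f j k * b k)
        ∂(Measure.pi fun _ => gaussianReal 0 1) ≤ (N + 1) * exp (lam ^ 2 * n / 2) := by
    intro f hf
    refine (integral_sum_cosh_pi_gaussianReal_le _ _ (σ2 := n) _ fun j _ => ?_).trans_eq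
      (by simp)
    simpa using Finset.sum_le_sum fun k (_ : k ∈ Finset.univ) => hf j k
  have hre := hnet_sum _ fun j k => cos_sq_le_one (2 * π * k * (j / N))
  have him := hnet_sum _ fun j k => sin_sq_le_one (2 * π * k * (j / N))
  have hcoord := integral_sum_cosh_apply_pi_gaussianReal_le (ι := Fin n)
  rw [Fintype.card_fin] at hcoord
  have hre_int := integrable_sum_cosh_pi_gaussianReal (Finset.range (N + 1)) lam
    fun j (k : Fin n) => cos (2 * π * k * (j / N))
  have him_int := integrable_sum_cosh_pi_gaussianReal (Finset.range (N + 1)) lam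
    fun j (k : Fin n) => sin (2 * π * k * (j / N))
  have hcoord_int := integrable_sum_cosh_apply_pi_gaussianReal (ι := Fin n)
  unfold trigPolyMajorant
  simp_rw [trigPoly_re, trigPoly_im]
  rw [integral_add ((integrable_const _).fun_add ((hre_int.fun_add him_int).const_mul _))
      (hcoord_int.const_mul _),
    integral_add (integrable_const _) ((hre_int.fun_add him_int).const_mul _),
    integral_const, integral_const_mul, integral_const_mul, integral_add hre_int him_int,
    probReal_univ, one_smul]
  calc _ ≤ 2 * a + 2 * exp (-(lam * a)) / lam *
          ((N + 1) * exp (lam ^ 2 * n / 2) + (N + 1) * exp (lam ^ 2 * n / 2)) +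
        4 * π * n / N * (n * exp (1 / 2)) := by gcongr
    _ = _ := by
      rw [sub_eq_add_neg, exp_add]
      ring

end TrigPolyMajorant

/-- The right-hand side of `integral_trigPolyMajorant_le` for `n = ℓ + 1`, `N = n²`,
`λ = s / ℓ` and `a = 3s`, where `s = √(ℓ log ℓ)`. -/
lemma majorant_bound_le_of_sq_eq_mul_log {ℓ s : ℝ} (hℓ : 2 ≤ ℓ) (hs : 0 < s)
    (hs2 : s ^ 2 = ℓ * log ℓ) :
    2 * (3 * s) + 4 * ((ℓ + 1) ^ 2 + 1) * exp ((s / ℓ) ^ 2 * (ℓ + 1) / 2 - s / ℓ * (3 * s)) /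
      (s / ℓ) + 4 * π * exp (1 / 2) ≤ 64 * s := by
  have hℓ0 : 0 < ℓ := by linarith
  have hL : 1 / 2 < log ℓ :=
    (log_two_gt_d9.trans_le' (by norm_num)).trans_le (log_le_log (by norm_num) hℓ)
  have hexponent : (s / ℓ) ^ 2 * (ℓ + 1) / 2 - s / ℓ * (3 * s) ≤ -(2 * log ℓ) := by
    have : (s / ℓ) ^ 2 * (ℓ + 1) / 2 - s / ℓ * (3 * s) = log ℓ * (1 - 5 * ℓ) / (2 * ℓ) := by
      field_simp
      rw [hs2]
      ring
    rw [this, div_le_iff₀ (by positivity)]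
    nlinarith
  have hexp : exp ((s / ℓ) ^ 2 * (ℓ + 1) / 2 - s / ℓ * (3 * s)) ≤ 1 / ℓ ^ 2 := by
    refine (exp_le_exp.2 hexponent).trans_eq ?_
    rw [exp_neg, two_mul, exp_add, exp_log hℓ0]
    ring
  have hnet : 4 * ((ℓ + 1) ^ 2 + 1) * exp ((s / ℓ) ^ 2 * (ℓ + 1) / 2 - s / ℓ * (3 * s)) /
      (s / ℓ) ≤ 24 * s := by
    calc _ ≤ 4 * ((ℓ + 1) ^ 2 + 1) * (1 / ℓ ^ 2) / (s / ℓ) := by gcongr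
      _ = 4 * ((ℓ + 1) ^ 2 + 1) / (ℓ * s) := by field_simp
      _ ≤ 24 * s := by
        rw [div_le_iff₀ (by positivity)]
        nlinarith
  have hlip : 4 * π * exp (1 / 2) ≤ 32 * s := by
    have hs1 : 1 ≤ s := by nlinarith
    have hexp_half : exp (1 / 2) < 2 := by
      rw [← lt_log_iff_exp_lt two_pos]
      linarith [log_two_gt_d9]
    nlinarith [pi_lt_four, pi_pos, exp_pos (1 / 2)]
  linarith

/-- Dudley-type bound for a random trigonometric polynomial with i.i.d. standard Gaussian
coefficients: there is a universal `C > 0` such that for every `ℓ ≥ 2`,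
`E[sup_{x ∈ [0,1]} |∑_{k=0}^ℓ b_k e^{2πikx}|] ≤ C (ℓ log ℓ)^{1/2}`. -/
theorem gaussian_trig_poly_sup_expectation :
    ∃ C : ℝ, 0 < C ∧ ∀ ℓ : ℕ, 2 ≤ ℓ →
      (∫ b, (⨆ x : Set.Icc (0 : ℝ) 1,
            (norm : ℂ → ℝ) (∑ k : Fin (ℓ + 1),
              (b k : ℂ) * Complex.exp (2 * Real.pi * Complex.I * (k : ℕ) * (x : ℝ))))
          ∂(Measure.pi fun _ : Fin (ℓ + 1) => gaussianReal 0 1))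
        ≤ C * Real.sqrt ((ℓ : ℝ) * Real.log ℓ) := by
  refine ⟨64, by norm_num, fun ℓ hℓ => ?_⟩
  have hℓ' : (2 : ℝ) ≤ ℓ := by exact_mod_cast hℓ
  set s := √((ℓ : ℝ) * log ℓ)
  have hs : 0 < s := sqrt_pos.2 (mul_pos (by linarith) (log_pos (by linarith)))
  have hlam : 0 < s / ℓ := by positivity
  calc _ ≤ ∫ b, trigPolyMajorant ((ℓ + 1) ^ 2) (s / ℓ) (3 * s) b
        ∂(Measure.pi fun _ : Fin (ℓ + 1) => gaussianReal 0 1) :=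
        integral_mono_of_nonneg (ae_of_all _ fun b => iSup_nonneg fun x => norm_nonneg _)
          (integrable_trigPolyMajorant _ _ _) (ae_of_all _ fun b => ciSup_le fun x =>
            norm_trigPoly_le_majorant (by positivity) hlam _ b x.2)
    _ ≤ _ := integral_trigPolyMajorant_le _ hlam _
    _ ≤ 64 * s := by
      push_cast
      rw [mul_div_cancel_right₀ _ (by positivity)]
      exact majorant_bound_le_of_sq_eq_mul_log hℓ' hs (sq_sqrt (by positivity))
end

section
/- Let s > 1/2, M > 0, ν > 0, Q₂ > 0. Let a : ℕ → ℝ satisfy Σ_{k≥0} (k + 1/2)^{2s} a_k² ≤ M², and let γ : ℕ → ℝ satisfy Σ_{k=0}^{ℓ} γ_k² ≤ Q₂ (max(ℓ,1))^{2ν−1} for all ℓ ∈ ℕ. Then there exists a constant C depending only on s, M, Q₂ such that for all ℓ ∈ ℕ: Σ_{i=0}^{ℓ} ( Σ_{j=0}^{i} a_{i−j} γ_j )² ≤ C (max(ℓ,1))^{2ν−1}; that is, ‖T_ℓ(a) γ^ℓ‖² ≤ C (max(ℓ,1))^{2ν−1} where γ^ℓ = (γ_0, …, γ_ℓ). -/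
/-!
`T_ℓ(a) γ` is the truncated convolution `a * γ`, so Young's inequality gives
`‖T_ℓ(a) γ‖₂ ≤ ‖a‖₁ ‖γ‖₂`. Since `2s > 1`, the Sobolev weights `W k = (k + 1/2)^{2s}` have
summable inverses, and Cauchy–Schwarz against `W` and `W⁻¹` bounds `‖a‖₁² ≤ (∑ W⁻¹) M²`.
-/

open Finset

lemma summable_inv_nat_add_half_rpow {p : ℝ} (hp : 1 < p) :
    Summable fun k : ℕ => (((k : ℝ) + 1 / 2) ^ p)⁻¹ := by
  refine ((Real.summable_one_div_nat_add_rpow (1 / 2) p).2 hp).congr fun k => ?_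
  rw [abs_of_pos (by positivity), one_div]

lemma sq_sum_abs_le_tsum_inv_mul_tsum {W a : ℕ → ℝ} (hW : ∀ k, 0 < W k)
    (hWinv : Summable fun k => (W k)⁻¹) (ha : Summable fun k => W k * a k ^ 2)
    (t : Finset ℕ) :
    (∑ k ∈ t, |a k|) ^ 2 ≤ (∑' k, (W k)⁻¹) * ∑' k, W k * a k ^ 2 := by
  have hcs : (∑ k ∈ t, |a k|) ^ 2 ≤ (∑ k ∈ t, (W k)⁻¹) * ∑ k ∈ t, W k * a k ^ 2 :=
    sum_sq_le_sum_mul_sum_of_sq_le_mul t (fun k _ => inv_nonneg.2 (hW k).le)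
      (fun k _ => mul_nonneg (hW k).le (sq_nonneg _)) fun k _ => by
      rw [sq_abs, ← mul_assoc, inv_mul_cancel₀ (hW k).ne', one_mul]
  refine hcs.trans (mul_le_mul ?_ ?_ (sum_nonneg fun k _ => ?_) (tsum_nonneg fun k => ?_))
  · exact hWinv.sum_le_tsum t fun k _ => inv_nonneg.2 (hW k).le
  · exact ha.sum_le_tsum t fun k _ => mul_nonneg (hW k).le (sq_nonneg _)
  · exact mul_nonneg (hW k).le (sq_nonneg _)
  · exact inv_nonneg.2 (hW k).le

lemma sq_sum_mul_le_sum_abs_mul_sum_abs_mul_sq {ι : Type*} (t : Finset ι) (b c : ι → ℝ) :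
    (∑ j ∈ t, b j * c j) ^ 2 ≤ (∑ j ∈ t, |b j|) * ∑ j ∈ t, |b j| * c j ^ 2 :=
  sum_sq_le_sum_mul_sum_of_sq_le_mul t (fun j _ => abs_nonneg _)
    (fun j _ => mul_nonneg (abs_nonneg _) (sq_nonneg _)) fun j _ => le_of_eq <| by
      rw [← mul_assoc, abs_mul_abs_self]; ring

lemma sum_range_succ_abs_sub_le (a : ℕ → ℝ) {i n : ℕ} (hi : i < n) :
    ∑ j ∈ range (i + 1), |a (i - j)| ≤ ∑ k ∈ range n, |a k| := by
  have hreflect := sum_range_reflect (fun k => |a k|) (i + 1)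
  simp only [Nat.add_sub_cancel] at hreflect
  rw [hreflect]
  exact sum_le_sum_of_subset_of_nonneg (range_subset_range.2 hi) fun k _ _ => abs_nonneg _

lemma sum_range_sum_range_succ_abs_sub_mul_le (a c : ℕ → ℝ) (hc : ∀ j, 0 ≤ c j) (n : ℕ) :
    ∑ i ∈ range n, ∑ j ∈ range (i + 1), |a (i - j)| * c j
      ≤ (∑ k ∈ range n, |a k|) * ∑ j ∈ range n, c j := by
  have hswap := sum_Ico_Ico_comm 0 n fun j i => |a (i - j)| * c j
  simp only [Nat.Ico_zero_eq_range] at hswap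
  rw [← hswap, mul_sum]
  refine sum_le_sum fun j _ => ?_
  rw [← sum_mul]
  refine mul_le_mul_of_nonneg_right ?_ (hc j)
  rw [sum_Ico_eq_sum_range]
  simp only [Nat.add_sub_cancel_left]
  exact sum_le_sum_of_subset_of_nonneg (range_subset_range.2 (Nat.sub_le n j))
    fun k _ _ => abs_nonneg _

lemma sum_sq_toeplitz_le (a γ : ℕ → ℝ) (n : ℕ) :
    ∑ i ∈ range n, (∑ j ∈ range (i + 1), a (i - j) * γ j) ^ 2
      ≤ (∑ k ∈ range n, |a k|) ^ 2 * ∑ j ∈ range n, γ j ^ 2 := by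
  set A := ∑ k ∈ range n, |a k|
  calc ∑ i ∈ range n, (∑ j ∈ range (i + 1), a (i - j) * γ j) ^ 2
      ≤ ∑ i ∈ range n, A * ∑ j ∈ range (i + 1), |a (i - j)| * γ j ^ 2 := by
        refine sum_le_sum fun i hi => (sq_sum_mul_le_sum_abs_mul_sum_abs_mul_sq _ _ _).trans ?_
        exact mul_le_mul_of_nonneg_right (sum_range_succ_abs_sub_le a (mem_range.1 hi))
          (sum_nonneg fun j _ => mul_nonneg (abs_nonneg _) (sq_nonneg _))
    _ ≤ A * (A * ∑ j ∈ range n, γ j ^ 2) := by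
        rw [← mul_sum]
        exact mul_le_mul_of_nonneg_left
          (sum_range_sum_range_succ_abs_sub_mul_le a _ (fun j => sq_nonneg _) n)
          (sum_nonneg fun k _ => abs_nonneg _)
    _ = A ^ 2 * ∑ j ∈ range n, γ j ^ 2 := by ring

/-- If `a` lies in a Laguerre–Sobolev ball of smoothness `s > 1/2` and radius `M`, and `γ`
satisfies the degree-`ν` bound `∑_{k≤ℓ} γ_k² ≤ Q₂ (max(ℓ,1))^{2ν−1}`, then there is a
constant `C` depending only on `s, M, Q₂` with
`∑_{i≤ℓ} (∑_{j≤i} a_{i−j} γ_j)² ≤ C (max(ℓ,1))^{2ν−1}` for all `ℓ`,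
i.e. `‖T_ℓ(a) γ^ℓ‖² ≤ C (max(ℓ,1))^{2ν−1}`. -/
theorem toeplitz_apply_sobolev_bound (s M Q₂ : ℝ) (hs : 1 / 2 < s) (hM : 0 < M)
    (hQ₂ : 0 < Q₂) :
    ∃ C : ℝ, 0 < C ∧ ∀ (ν : ℝ), 0 < ν → ∀ (a γ : ℕ → ℝ),
      Summable (fun k : ℕ => ((k : ℝ) + 1 / 2) ^ (2 * s) * (a k) ^ 2) →
      (∑' k : ℕ, ((k : ℝ) + 1 / 2) ^ (2 * s) * (a k) ^ 2) ≤ M ^ 2 →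
      (∀ ℓ : ℕ, ∑ k ∈ Finset.range (ℓ + 1), (γ k) ^ 2
          ≤ Q₂ * ((max ℓ 1 : ℕ) : ℝ) ^ (2 * ν - 1)) →
      ∀ ℓ : ℕ,
        ∑ i ∈ Finset.range (ℓ + 1), (∑ j ∈ Finset.range (i + 1), a (i - j) * γ j) ^ 2
          ≤ C * ((max ℓ 1 : ℕ) : ℝ) ^ (2 * ν - 1) := by
  set W : ℕ → ℝ := fun k => ((k : ℝ) + 1 / 2) ^ (2 * s)
  have hW : ∀ k, 0 < W k := fun k => by positivity
  have hWinv : Summable fun k => (W k)⁻¹ := summable_inv_nat_add_half_rpow (by linarith)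
  set S := ∑' k, (W k)⁻¹
  have hS : 0 < S := hWinv.tsum_pos (fun k => (inv_pos.2 (hW k)).le) 0 (inv_pos.2 (hW 0))
  refine ⟨S * M ^ 2 * Q₂, by positivity, fun ν _ a γ ha haM hγ ℓ => ?_⟩
  have hA : (∑ k ∈ range (ℓ + 1), |a k|) ^ 2 ≤ S * M ^ 2 :=
    (sq_sum_abs_le_tsum_inv_mul_tsum hW hWinv ha _).trans
      (mul_le_mul_of_nonneg_left haM hS.le)
  calc _ ≤ (∑ k ∈ range (ℓ + 1), |a k|) ^ 2 * ∑ j ∈ range (ℓ + 1), γ j ^ 2 :=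
        sum_sq_toeplitz_le a γ (ℓ + 1)
    _ ≤ S * M ^ 2 * (Q₂ * ((max ℓ 1 : ℕ) : ℝ) ^ (2 * ν - 1)) :=
        mul_le_mul hA (hγ ℓ) (sum_nonneg fun j _ => sq_nonneg _) (by positivity)
    _ = _ := by ring
end
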